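/- arXiv:2007.12650 — 7 statements merged into one kernel-verified Lean document; each statement's English description precedes it below -/
import Mathlib

section
/- For all Φ, T > 0, the partial derivative of B(Φ,T) = T·√(1 − (Φ/(Φ+T))²) with respect to Φ satisfies |∂B/∂Φ| ≤ 1/2. -/
/-!
On `Φ + T > 0` one has `1 - (Φ / (Φ + T))² = T (T + 2Φ) / (Φ + T)²`, and the chain rule gives
`∂B/∂Φ = -(√T / √(T + 2Φ)) · TΦ / (Φ + T)²`. The first factor is at most `1` in absolute value
for `Φ ≥ 0`, and the second is at most `1/4` by AM-GM.
-/

open Real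

theorem mul_div_add_sq_le_quarter (x y : ℝ) : x * y / (x + y) ^ 2 ≤ 1 / 4 := by
  rcases eq_or_ne (x + y) 0 with hxy | hxy
  · simp [hxy]
  · rw [div_le_iff₀ (by positivity)]
    nlinarith [sq_nonneg (x - y)]

theorem one_sub_div_add_sq {Φ T : ℝ} (hΦT : Φ + T ≠ 0) :
    1 - (Φ / (Φ + T)) ^ 2 = T * (T + 2 * Φ) / (Φ + T) ^ 2 := by
  field_simp
  ring

theorem sqrt_one_sub_div_add_sq {Φ T : ℝ} (hT : 0 ≤ T) (hΦT : 0 < Φ + T) :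
    √(1 - (Φ / (Φ + T)) ^ 2) = √T * √(T + 2 * Φ) / (Φ + T) := by
  rw [one_sub_div_add_sq hΦT.ne', sqrt_div' _ (sq_nonneg _), sqrt_sq hΦT.le, sqrt_mul hT]

theorem hasDerivAt_mul_sqrt_one_sub_div_sq {Φ T : ℝ} (hT : 0 < T) (hΦ : 0 < T + 2 * Φ) :
    HasDerivAt (fun φ => T * √(1 - (φ / (φ + T)) ^ 2))
      (-(√T / √(T + 2 * Φ)) * (T * Φ / (Φ + T) ^ 2)) Φ := by
  have hΦT : 0 < Φ + T := by linarith
  have hquot : HasDerivAt (fun φ => φ / (φ + T)) (T / (Φ + T) ^ 2) Φ :=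
    (hasDerivAt_id' Φ).div ((hasDerivAt_id' Φ).add_const T) hΦT.ne' |>.congr_deriv (by ring)
  have hroot : √(1 - (Φ / (Φ + T)) ^ 2) = √T * √(T + 2 * Φ) / (Φ + T) :=
    sqrt_one_sub_div_add_sq hT.le hΦT
  have hroot_ne : √(1 - (Φ / (Φ + T)) ^ 2) ≠ 0 := by rw [hroot]; positivity
  refine (((hquot.fun_pow 2).const_sub 1).sqrt
    (fun h => hroot_ne (by rw [h, sqrt_zero]))).const_mul T |>.congr_deriv ?_
  have hsqrtT : √T ≠ 0 := by positivity
  have hsqrtTΦ : √(T + 2 * Φ) ≠ 0 := by positivity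
  rw [hroot]
  norm_num only [Nat.cast_ofNat, pow_one]
  field_simp
  rw [sq_sqrt hT.le]
  ring

theorem abs_partial_deriv_B_wrt_Phi_le_half
    (B : ℝ → ℝ → ℝ)
    (hB : ∀ Φ T : ℝ, B Φ T = T * Real.sqrt (1 - (Φ / (Φ + T))^2)) :
    ∀ Φ T : ℝ, 0 < Φ → 0 < T →
      |deriv (fun φ => B φ T) Φ| ≤ 1/2 := by
  intro Φ T hΦ hT
  have hB' : (fun φ => B φ T) = fun φ => T * √(1 - (φ / (φ + T)) ^ 2) :=
    funext fun φ => hB φ T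
  have hratio : √T / √(T + 2 * Φ) ≤ 1 :=
    div_le_one_of_le₀ (sqrt_le_sqrt (by linarith)) (sqrt_nonneg _)
  rw [hB', (hasDerivAt_mul_sqrt_one_sub_div_sq hT (by linarith)).deriv, abs_mul, abs_neg,
    abs_of_nonneg (by positivity), abs_of_nonneg (by positivity)]
  calc √T / √(T + 2 * Φ) * (T * Φ / (Φ + T) ^ 2)
      ≤ 1 * (1 / 4) :=
        mul_le_mul hratio (add_comm T Φ ▸ mul_div_add_sq_le_quarter T Φ) (by positivity)
          zero_le_one
    _ ≤ 1 / 2 := by norm_num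
end

section
/- The function B(Φ,T) = T₊·√(1 − (Φ₊/(Φ₊+T₊))²) (extended by 0 where Φ₊+T₊=0) is globally Lipschitz on ℝ². -/
noncomputable def B (Φ T : ℝ) : ℝ :=
  if max Φ 0 + max T 0 = 0 then 0
  else max T 0 * Real.sqrt (1 - (max Φ 0 / (max Φ 0 + max T 0))^2)

noncomputable def fB (x y : ℝ) : ℝ := Real.sqrt (y^4 + 2*x*y^3) / (x + y)

lemma sqrt_diff_le {A A' s C : ℝ} (hA : 0 ≤ A) (hA' : 0 ≤ A') (hs : 0 < s)
    (h1 : s ≤ Real.sqrt A + Real.sqrt A') (h2 : |A - A'| ≤ C * s) :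
    |Real.sqrt A - Real.sqrt A'| ≤ C := by
  have hsum : (0:ℝ) < Real.sqrt A + Real.sqrt A' := lt_of_lt_of_le hs h1
  have e : |Real.sqrt A - Real.sqrt A'| * (Real.sqrt A + Real.sqrt A') = |A - A'| := by
    rw [← abs_of_nonneg hsum.le, ← abs_mul]
    congr 1
    nlinarith [Real.sq_sqrt hA, Real.sq_sqrt hA']
  have hC : 0 ≤ C := by nlinarith [abs_nonneg (A - A')]
  nlinarith [abs_nonneg (Real.sqrt A - Real.sqrt A')]

lemma fB_zero (x : ℝ) : fB x 0 = 0 := by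
  simp [fB]

lemma fB_nonneg (x y : ℝ) (hx : 0 ≤ x) (hy : 0 ≤ y) : 0 ≤ fB x y := by
  unfold fB; positivity

lemma fB_le (x y : ℝ) (hx : 0 ≤ x) (hy : 0 ≤ y) : fB x y ≤ y := by
  unfold fB
  rcases eq_or_lt_of_le hy with h | hy'
  · simp [← h]
  have hxy : 0 < x + y := by linarith
  rw [div_le_iff₀ hxy]
  have h1 : Real.sqrt (y^4 + 2*x*y^3) ≤ Real.sqrt ((y*(x+y))^2) := by
    apply Real.sqrt_le_sqrt; nlinarith [sq_nonneg (x*y)]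
  calc Real.sqrt (y^4 + 2*x*y^3) ≤ Real.sqrt ((y*(x+y))^2) := h1
    _ = y*(x+y) := Real.sqrt_sq (by positivity)

lemma B_eq (Φ T : ℝ) : B Φ T = fB (max Φ 0) (max T 0) := by
  set x := max Φ 0 with hxdef
  set y := max T 0 with hydef
  have hx : 0 ≤ x := le_max_right _ _
  have hy : 0 ≤ y := le_max_right _ _
  by_cases h : x + y = 0
  · have hx0 : x = 0 := by linarith [hy, hx]
    have hy0 : y = 0 := by linarith
    rw [B, if_pos h, hx0, hy0, fB_zero]
  · have hxy : 0 < x + y := lt_of_le_of_ne (by linarith) (Ne.symm h)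
    rw [B, if_neg h]
    have e1 : 1 - (x / (x+y))^2 = (y^2 + 2*x*y)/(x+y)^2 := by
      field_simp; ring
    have hc : (0:ℝ) ≤ y^2 + 2*x*y := by positivity
    have e2 : Real.sqrt (y^4+2*x*y^3) = y * Real.sqrt (y^2+2*x*y) := by
      rw [show y^4+2*x*y^3 = y^2*(y^2+2*x*y) by ring, Real.sqrt_mul (sq_nonneg y),
        Real.sqrt_sq hy]
    rw [e1, Real.sqrt_div hc, Real.sqrt_sq hxy.le, fB, e2, mul_div_assoc]

lemma sqrt_lb {c d : ℝ} (hd : 0 ≤ d) (h : d^2 ≤ c) : d ≤ Real.sqrt c := by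
  calc d = Real.sqrt (d^2) := (Real.sqrt_sq hd).symm
    _ ≤ Real.sqrt c := Real.sqrt_le_sqrt h

lemma fB_lip_x (x x' y : ℝ) (hx : 0 ≤ x) (hx' : 0 ≤ x') (hy : 0 ≤ y) :
    |fB x y - fB x' y| ≤ |x - x'| := by
  rcases eq_or_lt_of_le hy with h | hy'
  · simp [← h, fB_zero]
  have h1 : 0 < x + y := by linarith
  have h2 : 0 < x' + y := by linarith
  have ha : (0:ℝ) ≤ y^4 + 2*x*y^3 := by positivity
  have ha' : (0:ℝ) ≤ y^4 + 2*x'*y^3 := by positivity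
  have hfa : fB x y = Real.sqrt ((y^4 + 2*x*y^3) * (x'+y)^2) / ((x+y)*(x'+y)) := by
    rw [fB, Real.sqrt_mul ha, Real.sqrt_sq h2.le, mul_div_mul_right _ _ (ne_of_gt h2)]
  have hfa' : fB x' y = Real.sqrt ((y^4 + 2*x'*y^3) * (x+y)^2) / ((x+y)*(x'+y)) := by
    rw [fB, Real.sqrt_mul ha', Real.sqrt_sq h1.le, mul_comm (x+y) (x'+y),
      mul_div_mul_right _ _ (ne_of_gt h1)]
  have hden : (0:ℝ) < (x+y)*(x'+y) := by positivity
  rw [hfa, hfa', div_sub_div_same, abs_div, abs_of_pos hden, div_le_iff₀ hden]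
  apply sqrt_diff_le (by positivity) (by positivity)
    (s := y^2*(x+x'+2*y)) (by positivity)
  · have l1 : y^2*(x'+y) ≤ Real.sqrt ((y^4 + 2*x*y^3) * (x'+y)^2) := by
      apply sqrt_lb (by positivity); nlinarith [mul_nonneg (mul_nonneg hx (pow_pos hy' 3).le) (sq_nonneg (x'+y))]
    have l2 : y^2*(x+y) ≤ Real.sqrt ((y^4 + 2*x'*y^3) * (x+y)^2) := by
      apply sqrt_lb (by positivity); nlinarith [mul_nonneg (mul_nonneg hx' (pow_pos hy' 3).le) (sq_nonneg (x+y))]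
    nlinarith [l1, l2]
  · have key : (y^4 + 2*x*y^3) * (x'+y)^2 - (y^4 + 2*x'*y^3) * (x+y)^2
        = (x' - x) * (y^3*(x*y + x'*y + 2*x*x')) := by ring
    have hco : (0:ℝ) ≤ y^3*(x*y + x'*y + 2*x*x') := by positivity
    rw [key, abs_mul, abs_of_nonneg hco, abs_sub_comm x' x]
    rw [show |x - x'| * ((x+y)*(x'+y)) * (y^2*(x+x'+2*y))
        = |x - x'| * ((x+y)*(x'+y)*(y^2*(x+x'+2*y))) by ring]
    apply mul_le_mul_of_nonneg_left _ (abs_nonneg _)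
    nlinarith [mul_nonneg hx hx', mul_nonneg (mul_nonneg hx hx') hy'.le,
      mul_nonneg hx hy'.le, mul_nonneg hx' hy'.le, sq_nonneg y,
      mul_nonneg (mul_nonneg hx hy'.le) hy'.le, mul_nonneg (mul_nonneg hx' hy'.le) hy'.le]

lemma fB_lip_y (x y z : ℝ) (hx : 0 ≤ x) (hy : 0 ≤ y) (hz : 0 ≤ z) :
    |fB x y - fB x z| ≤ 3 * |y - z| := by
  rcases eq_or_lt_of_le hy with h | hy'
  · rw [← h, fB_zero, zero_sub, abs_neg, abs_of_nonneg (fB_nonneg x z hx hz)]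
    calc fB x z ≤ z := fB_le x z hx hz
      _ ≤ 3 * |0 - z| := by rw [zero_sub, abs_neg, abs_of_nonneg hz]; linarith
  rcases eq_or_lt_of_le hz with h | hz'
  · rw [← h, fB_zero, sub_zero, abs_of_nonneg (fB_nonneg x y hx hy)]
    calc fB x y ≤ y := fB_le x y hx hy
      _ ≤ 3 * |y - 0| := by rw [sub_zero, abs_of_nonneg hy]; linarith
  have h1 : 0 < x + y := by linarith
  have h2 : 0 < x + z := by linarith
  have ha : (0:ℝ) ≤ y^4 + 2*x*y^3 := by positivity
  have ha' : (0:ℝ) ≤ z^4 + 2*x*z^3 := by positivity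
  have hfa : fB x y = Real.sqrt ((y^4 + 2*x*y^3) * (x+z)^2) / ((x+y)*(x+z)) := by
    rw [fB, Real.sqrt_mul ha, Real.sqrt_sq h2.le, mul_div_mul_right _ _ (ne_of_gt h2)]
  have hfa' : fB x z = Real.sqrt ((z^4 + 2*x*z^3) * (x+y)^2) / ((x+y)*(x+z)) := by
    rw [fB, Real.sqrt_mul ha', Real.sqrt_sq h1.le, mul_comm (x+y) (x+z),
      mul_div_mul_right _ _ (ne_of_gt h1)]
  have hden : (0:ℝ) < (x+y)*(x+z) := by positivity
  rw [hfa, hfa', div_sub_div_same, abs_div, abs_of_pos hden, div_le_iff₀ hden]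
  apply sqrt_diff_le (by positivity) (by positivity)
    (s := y^2*(x+z) + z^2*(x+y)) (by positivity)
  · have l1 : y^2*(x+z) ≤ Real.sqrt ((y^4 + 2*x*y^3) * (x+z)^2) := by
      apply sqrt_lb (by positivity); nlinarith [mul_nonneg (mul_nonneg hx (pow_pos hy' 3).le) (sq_nonneg (x+z))]
    have l2 : z^2*(x+y) ≤ Real.sqrt ((z^4 + 2*x*z^3) * (x+y)^2) := by
      apply sqrt_lb (by positivity); nlinarith [mul_nonneg (mul_nonneg hx (pow_pos hz' 3).le) (sq_nonneg (x+y))]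
    linarith [l1, l2]
  · have key : (y^4 + 2*x*y^3) * (x+z)^2 - (z^4 + 2*x*z^3) * (x+y)^2
        = (y - z) * (y^2*z^3 + y^3*z^2 + 2*x*y*z^3 + 4*x*y^2*z^2 + 2*x*y^3*z
          + x^2*z^3 + 5*x^2*y*z^2 + 5*x^2*y^2*z + x^2*y^3 + 2*x^3*z^2
          + 2*x^3*y*z + 2*x^3*y^2) := by ring
    have hQ : (0:ℝ) ≤ y^2*z^3 + y^3*z^2 + 2*x*y*z^3 + 4*x*y^2*z^2 + 2*x*y^3*z
          + x^2*z^3 + 5*x^2*y*z^2 + 5*x^2*y^2*z + x^2*y^3 + 2*x^3*z^2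
          + 2*x^3*y*z + 2*x^3*y^2 := by positivity
    rw [key, abs_mul, abs_of_nonneg hQ]
    rw [show 3 * |y - z| * ((x+y)*(x+z)) * (y^2*(x+z) + z^2*(x+y))
        = |y - z| * (3 * ((x+y)*(x+z)*(y^2*(x+z) + z^2*(x+y)))) by ring]
    apply mul_le_mul_of_nonneg_left _ (abs_nonneg _)
    have cert : 3 * ((x+y)*(x+z)*(y^2*(x+z) + z^2*(x+y)))
        - (y^2*z^3 + y^3*z^2 + 2*x*y*z^3 + 4*x*y^2*z^2 + 2*x*y^3*z
          + x^2*z^3 + 5*x^2*y*z^2 + 5*x^2*y^2*z + x^2*y^3 + 2*x^3*z^2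
          + 2*x^3*y*z + 2*x^3*y^2)
        = x^3*(y-z)^2 + (2*y^2*z^3 + 2*y^3*z^2 + 4*x*y*z^3 + 2*x*y^2*z^2
          + 4*x*y^3*z + 2*x^2*z^3 + x^2*y*z^2 + x^2*y^2*z + 2*x^2*y^3) := by ring
    nlinarith [mul_nonneg (pow_nonneg hx 3) (sq_nonneg (y-z)),
      mul_nonneg (mul_nonneg (sq_nonneg y) hz) (sq_nonneg z),
      mul_nonneg (mul_nonneg (pow_nonneg hy 3) hz) hz,
      mul_nonneg (mul_nonneg (mul_nonneg hx hy) hz) (sq_nonneg z),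
      mul_nonneg (mul_nonneg (mul_nonneg hx (sq_nonneg y)) hz) hz,
      mul_nonneg (mul_nonneg hx (pow_nonneg hy 3)) hz,
      mul_nonneg (mul_nonneg (sq_nonneg x) hz) (sq_nonneg z),
      mul_nonneg (mul_nonneg (sq_nonneg x) hy) (sq_nonneg z),
      mul_nonneg (mul_nonneg (sq_nonneg x) (sq_nonneg y)) hz,
      mul_nonneg (sq_nonneg x) (pow_nonneg hy 3)]

theorem B_lipschitz : ∃ L : NNReal, LipschitzWith L (fun p : ℝ × ℝ => B p.1 p.2) := by
  refine ⟨4, LipschitzWith.of_dist_le_mul fun p q => ?_⟩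
  simp only [Prod.dist_eq, Real.dist_eq]
  have hx1 : (0:ℝ) ≤ max p.1 0 := le_max_right _ _
  have hx2 : (0:ℝ) ≤ max q.1 0 := le_max_right _ _
  have hy1 : (0:ℝ) ≤ max p.2 0 := le_max_right _ _
  have hy2 : (0:ℝ) ≤ max q.2 0 := le_max_right _ _
  have e1 : |max p.1 0 - max q.1 0| ≤ |p.1 - q.1| := abs_max_sub_max_le_abs _ _ _
  have e2 : |max p.2 0 - max q.2 0| ≤ |p.2 - q.2| := abs_max_sub_max_le_abs _ _ _
  have tri : |B p.1 p.2 - B q.1 q.2|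
      ≤ |fB (max p.1 0) (max p.2 0) - fB (max q.1 0) (max p.2 0)|
        + |fB (max q.1 0) (max p.2 0) - fB (max q.1 0) (max q.2 0)| := by
    rw [B_eq, B_eq]
    exact abs_sub_le _ _ _
  have l1 := fB_lip_x (max p.1 0) (max q.1 0) (max p.2 0) hx1 hx2 hy1
  have l2 := fB_lip_y (max q.1 0) (max p.2 0) (max q.2 0) hx2 hy1 hy2
  have m1 : |p.1 - q.1| ≤ max |p.1 - q.1| |p.2 - q.2| := le_max_left _ _
  have m2 : |p.2 - q.2| ≤ max |p.1 - q.1| |p.2 - q.2| := le_max_right _ _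
  have : ((4:NNReal):ℝ) = 4 := by norm_num
  rw [this]
  calc |B p.1 p.2 - B q.1 q.2|
      ≤ |fB (max p.1 0) (max p.2 0) - fB (max q.1 0) (max p.2 0)|
        + |fB (max q.1 0) (max p.2 0) - fB (max q.1 0) (max q.2 0)| := tri
    _ ≤ |p.1 - q.1| + 3 * |p.2 - q.2| := by
        have := l1.trans e1
        have h2' : |fB (max q.1 0) (max p.2 0) - fB (max q.1 0) (max q.2 0)|
            ≤ 3 * |p.2 - q.2| := l2.trans (by linarith [e2])
        linarith
    _ ≤ 4 * max |p.1 - q.1| |p.2 - q.2| := by linarith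
end

section
/- The function D(Φ,T) = T₊·Φ₊/(Φ₊+T₊) (extended by 0 where Φ₊+T₊=0) is globally Lipschitz on ℝ². -/
noncomputable def D (Φ T : ℝ) : ℝ :=
  if max Φ 0 + max T 0 = 0 then 0
  else max T 0 * (max Φ 0 / (max Φ 0 + max T 0))

noncomputable def gg (a c : ℝ) : ℝ := if a + c = 0 then 0 else c * (a / (a + c))

lemma D_eq_gg (Φ T : ℝ) : D Φ T = gg (max Φ 0) (max T 0) := rfl

lemma gg_symm (a c : ℝ) : gg a c = gg c a := by
  unfold gg
  by_cases h : a + c = 0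
  · rw [if_pos h, if_pos (by rwa [add_comm])]
  · rw [if_neg h, if_neg (by rwa [add_comm])]
    rw [add_comm c a]
    ring

lemma gg_key (a b c : ℝ) (ha : 0 ≤ a) (hb : 0 ≤ b) (hc : 0 ≤ c) :
    |gg a c - gg b c| ≤ |a - b| := by
  unfold gg
  by_cases h1 : a + c = 0
  · have ha0 : a = 0 := by linarith
    have hc0 : c = 0 := by linarith
    by_cases h2 : b + c = 0
    · simp [h1, h2]
    · rw [if_pos h1, if_neg h2, hc0]
      simp [ha0, abs_nonneg]
  · by_cases h2 : b + c = 0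
    · have hb0 : b = 0 := by linarith
      have hc0 : c = 0 := by linarith
      rw [if_neg h1, if_pos h2, hc0]
      simp [hb0, abs_nonneg]
    · rw [if_neg h1, if_neg h2]
      have h1' : 0 < a + c := lt_of_le_of_ne (by linarith) (Ne.symm h1)
      have h2' : 0 < b + c := lt_of_le_of_ne (by linarith) (Ne.symm h2)
      have key : c * (a / (a + c)) - c * (b / (b + c)) =
          c ^ 2 * (a - b) / ((a + c) * (b + c)) := by
        field_simp
        ring
      rw [key, abs_div, abs_mul]
      rw [abs_of_pos (by positivity : (0:ℝ) < (a + c) * (b + c))]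
      rw [abs_of_nonneg (by positivity : (0:ℝ) ≤ c ^ 2)]
      rw [div_le_iff₀ (by positivity)]
      have hcc : c ^ 2 ≤ (a + c) * (b + c) := by nlinarith
      nlinarith [abs_nonneg (a - b), mul_le_mul_of_nonneg_left hcc (abs_nonneg (a - b))]

lemma max_sub (x y : ℝ) : |max x 0 - max y 0| ≤ |x - y| := by
  cases' abs_cases (x - y) with h h <;>
  · rw [abs_le]
    constructor <;> simp [max_def] <;> split_ifs <;> linarith [h.1]

theorem D_lipschitz : ∃ L : NNReal, LipschitzWith L (fun p : ℝ × ℝ => D p.1 p.2) := by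
  refine ⟨2, LipschitzWith.of_dist_le_mul fun p q => ?_⟩
  simp only [Real.dist_eq, Prod.dist_eq]
  have hp1 : 0 ≤ max p.1 0 := le_max_right _ _
  have hq1 : 0 ≤ max q.1 0 := le_max_right _ _
  have hp2 : 0 ≤ max p.2 0 := le_max_right _ _
  have hq2 : 0 ≤ max q.2 0 := le_max_right _ _
  have step1 : |D p.1 p.2 - D q.1 p.2| ≤ |p.1 - q.1| := by
    rw [D_eq_gg, D_eq_gg]
    exact le_trans (gg_key _ _ _ hp1 hq1 hp2) (max_sub _ _)
  have step2 : |D q.1 p.2 - D q.1 q.2| ≤ |p.2 - q.2| := by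
    rw [D_eq_gg, D_eq_gg, gg_symm, gg_symm (max q.1 0)]
    exact le_trans (gg_key _ _ _ hp2 hq2 hq1) (max_sub _ _)
  have tri : |D p.1 p.2 - D q.1 q.2| ≤ |p.1 - q.1| + |p.2 - q.2| := by
    calc |D p.1 p.2 - D q.1 q.2| ≤ |D p.1 p.2 - D q.1 p.2| + |D q.1 p.2 - D q.1 q.2| :=
          abs_sub_le _ _ _
      _ ≤ _ := add_le_add step1 step2
  have h1 : |p.1 - q.1| ≤ max (dist p.1 q.1) (dist p.2 q.2) := le_max_of_le_left (le_of_eq (Real.dist_eq _ _).symm)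
  have h2 : |p.2 - q.2| ≤ max (dist p.1 q.1) (dist p.2 q.2) := le_max_of_le_right (le_of_eq (Real.dist_eq _ _).symm)
  push_cast
  calc |D p.1 p.2 - D q.1 q.2| ≤ |p.1 - q.1| + |p.2 - q.2| := tri
    _ ≤ max (dist p.1 q.1) (dist p.2 q.2) + max (dist p.1 q.1) (dist p.2 q.2) := add_le_add h1 h2
    _ = 2 * max (dist p.1 q.1) (dist p.2 q.2) := by ring
end

section
/- For the sum S = T + N + Φ of a nonnegative solution of the ODE system, S satisfies S'(t) = g(t)·(1 − S(t)/K) with g(t) ≥ 0; consequently, if S(0) < K then S is nondecreasing and S(t) ≤ K for all t ≥ 0, if S(0) = K then S(t) = K for all t, and if S(0) > K then S is nonincreasing with S(t) ≥ K. -/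
/-!
Since `S' (S - K) = -(g/K) (S - K)² ≤ 0`, the squared distance `(S - K)²` is nonincreasing.
Hence once `S` reaches `K` it stays there, so by the intermediate value theorem `S - K` keeps the
sign of `S 0 - K`; that sign in turn fixes the sign of `S' = (g/K) (K - S)`.
-/

open Set

section

variable {f f' : ℝ → ℝ} {a : ℝ}

theorem monotoneOn_Ici_of_hasDerivAt_nonneg (hf : ∀ t ∈ Ici a, HasDerivAt f (f' t) t)
    (hf' : ∀ t ∈ Ici a, 0 ≤ f' t) : MonotoneOn f (Ici a) :=
  monotoneOn_of_hasDerivWithinAt_nonneg (convex_Ici a)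
    (fun t ht => (hf t ht).continuousAt.continuousWithinAt)
    (fun t ht => (hf t (interior_subset ht)).hasDerivWithinAt)
    (fun t ht => hf' t (interior_subset ht))

theorem antitoneOn_Ici_of_hasDerivAt_nonpos (hf : ∀ t ∈ Ici a, HasDerivAt f (f' t) t)
    (hf' : ∀ t ∈ Ici a, f' t ≤ 0) : AntitoneOn f (Ici a) :=
  antitoneOn_of_hasDerivWithinAt_nonpos (convex_Ici a)
    (fun t ht => (hf t ht).continuousAt.continuousWithinAt)
    (fun t ht => (hf t (interior_subset ht)).hasDerivWithinAt)
    (fun t ht => hf' t (interior_subset ht))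

variable {c : ℝ}

theorem antitoneOn_sq_sub_of_hasDerivAt_mul_sub_nonpos (hf : ∀ t ∈ Ici a, HasDerivAt f (f' t) t)
    (hattract : ∀ t ∈ Ici a, f' t * (f t - c) ≤ 0) :
    AntitoneOn (fun t => (f t - c) ^ 2) (Ici a) := by
  refine antitoneOn_Ici_of_hasDerivAt_nonpos (f' := fun t => 2 * (f t - c) * f' t)
    (fun t ht => ?_) (fun t ht => ?_)
  · simpa using ((hf t ht).sub_const c).fun_pow 2
  · nlinarith [hattract t ht]

theorem le_of_hasDerivAt_mul_sub_nonpos (hf : ∀ t ∈ Ici a, HasDerivAt f (f' t) t)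
    (hattract : ∀ t ∈ Ici a, f' t * (f t - c) ≤ 0) (ha : f a ≤ c) :
    ∀ t ∈ Ici a, f t ≤ c := by
  intro t ht
  by_contra! hlt
  have hcont : ContinuousOn f (Icc a t) :=
    fun s hs => (hf s hs.1).continuousAt.continuousWithinAt
  obtain ⟨s, hs, hfs⟩ := intermediate_value_Icc ht hcont ⟨ha, hlt.le⟩
  have hdist : (f t - c) ^ 2 ≤ (f s - c) ^ 2 :=
    antitoneOn_sq_sub_of_hasDerivAt_mul_sub_nonpos hf hattract hs.1 ht hs.2
  rw [hfs, sub_self] at hdist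
  nlinarith

theorem ge_of_hasDerivAt_mul_sub_nonpos (hf : ∀ t ∈ Ici a, HasDerivAt f (f' t) t)
    (hattract : ∀ t ∈ Ici a, f' t * (f t - c) ≤ 0) (ha : c ≤ f a) :
    ∀ t ∈ Ici a, c ≤ f t := by
  have hneg := le_of_hasDerivAt_mul_sub_nonpos (f := -f) (f' := -f') (c := -c)
    (fun t ht => (hf t ht).neg)
    (fun t ht => by simp only [Pi.neg_apply]; linarith [hattract t ht]) (by simpa using ha)
  exact fun t ht => by simpa using hneg t ht

end

theorem sum_equation_monotonicity
    (S g : ℝ → ℝ) (K : ℝ) (hK : 0 < K)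
    (hderiv : ∀ t, 0 ≤ t → HasDerivAt S (g t * (1 - S t / K)) t)
    (hg : ∀ t, 0 ≤ t → 0 ≤ g t) :
    (S 0 < K → MonotoneOn S (Set.Ici (0:ℝ)) ∧ ∀ t, 0 ≤ t → S t ≤ K) ∧
    (S 0 = K → ∀ t, 0 ≤ t → S t = K) ∧
    (K < S 0 → AntitoneOn S (Set.Ici (0:ℝ)) ∧ ∀ t, 0 ≤ t → K ≤ S t) := by
  have hattract : ∀ t ∈ Ici (0 : ℝ), g t * (1 - S t / K) * (S t - K) ≤ 0 := by
    intro t ht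
    have hsq : g t * (1 - S t / K) * (S t - K) = -(g t * (S t - K) ^ 2 / K) := by
      field_simp
      ring
    rw [hsq, neg_nonpos]
    exact div_nonneg (mul_nonneg (hg t ht) (sq_nonneg _)) hK.le
  have hbelow := le_of_hasDerivAt_mul_sub_nonpos hderiv hattract
  have habove := ge_of_hasDerivAt_mul_sub_nonpos hderiv hattract
  refine ⟨fun h0 => ⟨?_, hbelow h0.le⟩,
    fun h0 t ht => le_antisymm (hbelow h0.le t ht) (habove h0.ge t ht),
    fun h0 => ⟨?_, habove h0.le⟩⟩
  · refine monotoneOn_Ici_of_hasDerivAt_nonneg hderiv fun t ht => ?_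
    exact mul_nonneg (hg t ht) (sub_nonneg.2 ((div_le_one hK).2 (hbelow h0.le t ht)))
  · refine antitoneOn_Ici_of_hasDerivAt_nonpos hderiv fun t ht => ?_
    exact mul_nonpos_of_nonneg_of_nonpos (hg t ht)
      (sub_nonpos.2 ((one_le_div hK).2 (habove h0.le t ht)))
end

section
/- (Pointwise vanishing of vasculature) Let (T,N,Φ) be a nonnegative solution of the glioblastoma ODE system at a fixed spatial point with 0 ≤ T(t), Φ(t) ≤ K for all t and N nondecreasing with N(0) = N₀ > 0. Then Φ(t) → 0 as t → ∞. -/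
/-!
Since `N` is nondecreasing, it either tends to `∞` or converges. Both `T ≤ K` and `Φ ≥ 0` give
`Φ' ≤ (γ - β₂ N) Φ`. If `N → ∞`, then eventually `β₂ N ≥ γ + 1`, so `Φ' ≤ -Φ` and `Φ` decays
exponentially. If `N` converges, its increments over windows of a fixed length `h` tend to `0`.
But `Φ' ≤ γ K` keeps `Φ ≥ Φ(s) - γ K h` on `[s - h, s]`, and `N' ≥ β₂ N₀ Φ`, so the increment over
`[s - h, s]` is at least `β₂ N₀ h (Φ(s) - γ K h)`. Hence `limsup Φ ≤ γ K h` for every `h > 0`.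
-/

open Filter Set Topology Real

theorem tendsto_atTop_of_monotoneOn_Ici {ι α : Type*} [LinearOrder ι] [TopologicalSpace α]
    [ConditionallyCompleteLinearOrder α] [OrderTopology α] {f : ι → α} {a : ι}
    (hf : MonotoneOn f (Ici a)) :
    Tendsto f atTop atTop ∨ ∃ L, Tendsto f atTop (𝓝 L) := by
  have hmono : Monotone fun t => f (max a t) := fun x y hxy =>
    hf (le_max_left a x) (le_max_left a y) (max_le_max le_rfl hxy)
  have heq : (fun t => f (max a t)) =ᶠ[atTop] f :=
    (eventually_ge_atTop a).mono fun t ht => by simp only [max_eq_right ht]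
  exact (tendsto_atTop_of_monotone hmono).imp (·.congr' heq)
    fun ⟨L, hL⟩ => ⟨L, hL.congr' heq⟩

theorem sub_le_mul_sub_of_hasDerivAt_le {f f' : ℝ → ℝ} {C x y : ℝ} (hxy : x ≤ y)
    (hf : ∀ t ∈ Icc x y, HasDerivAt f (f' t) t) (hf' : ∀ t ∈ Icc x y, f' t ≤ C) :
    f y - f x ≤ C * (y - x) := by
  refine (convex_Icc x y).image_sub_le_mul_sub_of_deriv_le
    (fun t ht => (hf t ht).continuousAt.continuousWithinAt) (fun t ht => ?_) (fun t ht => ?_)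
    x (left_mem_Icc.2 hxy) y (right_mem_Icc.2 hxy) hxy
  all_goals rw [interior_Icc] at ht
  · exact (hf t (Ioo_subset_Icc_self ht)).differentiableAt.differentiableWithinAt
  · rw [(hf t (Ioo_subset_Icc_self ht)).deriv]
    exact hf' t (Ioo_subset_Icc_self ht)

theorem mul_sub_le_sub_of_le_hasDerivAt {f f' : ℝ → ℝ} {C x y : ℝ} (hxy : x ≤ y)
    (hf : ∀ t ∈ Icc x y, HasDerivAt f (f' t) t) (hf' : ∀ t ∈ Icc x y, C ≤ f' t) :
    C * (y - x) ≤ f y - f x := by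
  have := sub_le_mul_sub_of_hasDerivAt_le (f := -f) (f' := -f') (C := -C) hxy
    (fun t ht => (hf t ht).neg) (fun t ht => neg_le_neg (hf' t ht))
  simp only [Pi.neg_apply] at this
  linarith

theorem mul_mul_sub_le_sub_of_mul_le_hasDerivAt {f f' g g' : ℝ → ℝ} {c M h s : ℝ}
    (hc : 0 ≤ c) (hM : 0 ≤ M) (hh : 0 ≤ h)
    (hf : ∀ t ∈ Icc (s - h) s, HasDerivAt f (f' t) t) (hf' : ∀ t ∈ Icc (s - h) s, f' t ≤ M)
    (hg : ∀ t ∈ Icc (s - h) s, HasDerivAt g (g' t) t)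
    (hg' : ∀ t ∈ Icc (s - h) s, c * f t ≤ g' t) :
    c * h * (f s - M * h) ≤ g s - g (s - h) := by
  have hf_lb : ∀ t ∈ Icc (s - h) s, f s - M * h ≤ f t := fun t ht => by
    have hsub : Icc t s ⊆ Icc (s - h) s := Icc_subset_Icc_left ht.1
    have := sub_le_mul_sub_of_hasDerivAt_le ht.2 (fun u hu => hf u (hsub hu))
      (fun u hu => hf' u (hsub hu))
    nlinarith [ht.1]
  have := mul_sub_le_sub_of_le_hasDerivAt (by linarith) hg
    fun t ht => (mul_le_mul_of_nonneg_left (hf_lb t ht) hc).trans (hg' t ht)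
  rw [sub_sub_cancel] at this
  linarith

theorem tendsto_zero_of_hasDerivAt_le_neg_mul {f f' : ℝ → ℝ} {c : ℝ} (hc : 0 < c)
    (hf : ∀ᶠ t in atTop, HasDerivAt f (f' t) t) (hf' : ∀ᶠ t in atTop, f' t ≤ -c * f t)
    (hf0 : ∀ᶠ t in atTop, 0 ≤ f t) : Tendsto f atTop (𝓝 0) := by
  obtain ⟨a, ha⟩ := eventually_atTop.1 (hf.and hf')
  have hbound : ∀ t ≥ a, f t ≤ exp (c * a) * f a * exp (-(c * t)) := fun t ht => by
    have hdecr := sub_le_mul_sub_of_hasDerivAt_le (f := fun t => exp (c * t) * f t)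
      (f' := fun t => exp (c * t) * (c * f t + f' t)) (C := 0) ht
      (fun u hu => (((hasDerivAt_id u).const_mul c).exp.mul (ha u hu.1).1).congr_deriv
        (by simp only [id, mul_one]; ring))
      (fun u hu => mul_nonpos_of_nonneg_of_nonpos (exp_pos _).le (by linarith [(ha u hu.1).2]))
    rw [exp_neg, ← div_eq_mul_inv, le_div_iff₀ (exp_pos _)]
    linarith
  have hdecay : Tendsto (fun t => exp (c * a) * f a * exp (-(c * t))) atTop (𝓝 0) := by
    simpa using (tendsto_exp_neg_atTop_nhds_zero.comp
      (tendsto_id.const_mul_atTop hc)).const_mul (exp (c * a) * f a)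
  exact tendsto_of_tendsto_of_tendsto_of_le_of_le' tendsto_const_nhds hdecay hf0
    (eventually_atTop.2 ⟨a, hbound⟩)

theorem tendsto_zero_of_mul_le_deriv_of_tendsto {f f' g g' : ℝ → ℝ} {c M L : ℝ} (hc : 0 < c)
    (hf : ∀ᶠ t in atTop, HasDerivAt f (f' t) t) (hf' : ∀ᶠ t in atTop, f' t ≤ M)
    (hf0 : ∀ᶠ t in atTop, 0 ≤ f t) (hg : ∀ᶠ t in atTop, HasDerivAt g (g' t) t)
    (hg' : ∀ᶠ t in atTop, c * f t ≤ g' t) (hgL : Tendsto g atTop (𝓝 L)) :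
    Tendsto f atTop (𝓝 0) := by
  obtain ⟨a, ha⟩ := eventually_atTop.1 (hf.and (hf'.and (hg.and hg')))
  refine tendsto_order.2 ⟨fun b hb => hf0.mono fun t ht => hb.trans_le ht, fun ε hε => ?_⟩
  obtain ⟨h, hh, hMh⟩ := exists_pos_mul_lt (half_pos hε) (max M 0)
  have hincr : Tendsto (fun s => g s - g (s - h)) atTop (𝓝 0) := by
    simpa [← sub_eq_add_neg] using
      hgL.sub (hgL.comp (tendsto_atTop_add_const_right _ (-h) tendsto_id))
  have hch : 0 < c * h := mul_pos hc hh
  filter_upwards [eventually_ge_atTop (a + h),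
    hincr.eventually (gt_mem_nhds (mul_pos hch (half_pos hε)))] with s hs hsmall
  have hat : ∀ t ∈ Icc (s - h) s, a ≤ t := fun t ht => by linarith [ht.1]
  have := mul_mul_sub_le_sub_of_mul_le_hasDerivAt hc.le (le_max_right M 0) hh.le
    (fun t ht => (ha t (hat t ht)).1) (fun t ht => (ha t (hat t ht)).2.1.trans (le_max_left M 0))
    (fun t ht => (ha t (hat t ht)).2.2.1) (fun t ht => (ha t (hat t ht)).2.2.2)
  linarith [lt_of_mul_lt_mul_left (this.trans_lt hsmall) hch.le]

theorem vasculature_vanishes_pointwise_general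
    (T N Φ N' Φ' : ℝ → ℝ) (β₂ γ δ K : ℝ)
    (hβ₂ : 0 < β₂) (hγ : 0 < γ)
    (hδ : 0 < δ) (hK : 0 < K)
    (hTnonneg : ∀ t, 0 ≤ t → 0 ≤ T t)
    (hΦnonneg : ∀ t, 0 ≤ t → 0 ≤ Φ t)
    (hTle : ∀ t, 0 ≤ t → T t ≤ K) (hΦle : ∀ t, 0 ≤ t → Φ t ≤ K)
    (hNmono : MonotoneOn N (Set.Ici (0:ℝ)))
    (hN0 : 0 < N 0)
    (hNderiv : ∀ t, 0 ≤ t → HasDerivAt N (N' t) t)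
    (hΦderiv : ∀ t, 0 ≤ t → HasDerivAt Φ (Φ' t) t)
    (hN'lb : ∀ t, 0 ≤ t → β₂ * N t * Φ t ≤ N' t)
    (hΦ'ub : ∀ t, 0 ≤ t → Φ' t ≤ γ / K * T t * Φ t - δ * T t * Φ t - β₂ * N t * Φ t) :
    Filter.Tendsto Φ Filter.atTop (nhds 0) := by
  have ev {P : ℝ → Prop} (hP : ∀ t, 0 ≤ t → P t) : ∀ᶠ t in atTop, P t :=
    (eventually_ge_atTop 0).mono hP
  have hNge : ∀ t, 0 ≤ t → N 0 ≤ N t := fun t ht => hNmono self_mem_Ici ht ht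
  have hΦ'le : ∀ t, 0 ≤ t → Φ' t ≤ (γ - β₂ * N t) * Φ t := fun t ht => by
    have hT : γ / K * T t ≤ γ :=
      (mul_le_mul_of_nonneg_left (hTle t ht) (by positivity)).trans_eq (div_mul_cancel₀ γ hK.ne')
    nlinarith [hΦ'ub t ht, mul_le_mul_of_nonneg_right hT (hΦnonneg t ht),
      mul_nonneg (mul_nonneg hδ.le (hTnonneg t ht)) (hΦnonneg t ht)]
  rcases tendsto_atTop_of_monotoneOn_Ici hNmono with hN | ⟨L, hL⟩
  · refine tendsto_zero_of_hasDerivAt_le_neg_mul one_pos (ev hΦderiv) ?_ (ev hΦnonneg)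
    filter_upwards [eventually_ge_atTop 0, hN.eventually_ge_atTop ((γ + 1) / β₂)] with t ht hNt
    have hβN : γ + 1 ≤ β₂ * N t := by rwa [div_le_iff₀' hβ₂] at hNt
    nlinarith [hΦ'le t ht, hΦnonneg t ht]
  · refine tendsto_zero_of_mul_le_deriv_of_tendsto (mul_pos hβ₂ hN0) (M := γ * K) (ev hΦderiv)
      (ev fun t ht => ?_) (ev hΦnonneg) (ev hNderiv) (ev fun t ht => ?_) hL
    · have hNΦ : 0 ≤ β₂ * N t * Φ t :=
        mul_nonneg (mul_nonneg hβ₂.le (hN0.le.trans (hNge t ht))) (hΦnonneg t ht)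
      nlinarith [hΦ'le t ht, mul_le_mul_of_nonneg_left (hΦle t ht) hγ.le]
    · exact (mul_le_mul_of_nonneg_right (mul_le_mul_of_nonneg_left (hNge t ht) hβ₂.le)
        (hΦnonneg t ht)).trans (hN'lb t ht)

theorem vasculature_vanishes_pointwise
    (T N Φ N' Φ' : ℝ → ℝ) (α β₁ β₂ γ δ ρ K : ℝ)
    (hα : 0 < α) (hβ₁ : 0 < β₁) (hβ₂ : 0 < β₂) (hγ : 0 < γ)
    (hδ : 0 < δ) (hρ : 0 < ρ) (hK : 0 < K)
    (hTnonneg : ∀ t, 0 ≤ t → 0 ≤ T t) (hNnonneg : ∀ t, 0 ≤ t → 0 ≤ N t)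
    (hΦnonneg : ∀ t, 0 ≤ t → 0 ≤ Φ t)
    (hTle : ∀ t, 0 ≤ t → T t ≤ K) (hΦle : ∀ t, 0 ≤ t → Φ t ≤ K)
    (hNmono : MonotoneOn N (Set.Ici (0:ℝ)))
    (hN0 : 0 < N 0)
    (hNderiv : ∀ t, 0 ≤ t → HasDerivAt N (N' t) t)
    (hΦderiv : ∀ t, 0 ≤ t → HasDerivAt Φ (Φ' t) t)
    (hN'lb : ∀ t, 0 ≤ t → β₂ * N t * Φ t ≤ N' t)
    (hΦ'ub : ∀ t, 0 ≤ t → Φ' t ≤ γ / K * T t * Φ t - δ * T t * Φ t - β₂ * N t * Φ t)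
    (hΦ'lb : ∀ t, 0 ≤ t → N t < K → -(2 * γ + δ * K + β₂ * K) * Φ t ≤ Φ' t) :
    Filter.Tendsto Φ Filter.atTop (nhds 0) :=
  vasculature_vanishes_pointwise_general T N Φ N' Φ' β₂ γ δ K hβ₂ hγ hδ hK hTnonneg hΦnonneg hTle
    hΦle hNmono hN0 hNderiv hΦderiv hN'lb hΦ'ub
end

section
/- (Exponential decay under δ ≥ γ/K, ODE version at a point) Assume δ ≥ γ/K and N₀ > 0. If (T,N,Φ) is a nonnegative solution with N(t) ≥ N₀ for all t and Φ' = f₃(T,N,Φ), then Φ(t) ≤ Φ(0)·e^{−β₂ N₀ t} for all t ≥ 0. -/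
noncomputable def f₃ (β₂ γ δ K : ℝ) (T N Φ : ℝ) : ℝ :=
  γ / K * T * Real.sqrt (1 - (Φ / (Φ + T))^2) * Φ * (1 - (T + N + Φ) / K)
    - δ * T * Φ - β₂ * N * Φ

lemma f3_bound (β₂ γ δ K N₀ T N Φ : ℝ)
    (hβ₂ : 0 < β₂) (hγ : 0 < γ) (hK : 0 < K) (hδγ : γ / K ≤ δ)
    (hT : 0 ≤ T) (hΦ : 0 ≤ Φ) (hN : N₀ ≤ N) (hN₀ : 0 < N₀) :
    f₃ β₂ γ δ K T N Φ ≤ -(β₂ * N₀) * Φ := by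
  have hNpos : 0 < N := lt_of_lt_of_le hN₀ hN
  have hs0 : 0 ≤ Real.sqrt (1 - (Φ / (Φ + T))^2) := Real.sqrt_nonneg _
  have hs1 : Real.sqrt (1 - (Φ / (Φ + T))^2) ≤ 1 := by
    have h1 : 1 - (Φ / (Φ + T))^2 ≤ 1 := by nlinarith [sq_nonneg (Φ / (Φ + T))]
    calc Real.sqrt (1 - (Φ / (Φ + T))^2) ≤ Real.sqrt 1 := Real.sqrt_le_sqrt h1
    _ = 1 := Real.sqrt_one
  have hc : 0 ≤ γ / K * T * Φ := by positivity
  have hfac : 1 - (T + N + Φ) / K ≤ 1 := by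
    have : 0 ≤ (T + N + Φ) / K := by positivity
    linarith
  have hA : γ / K * T * Real.sqrt (1 - (Φ / (Φ + T))^2) * Φ * (1 - (T + N + Φ) / K)
      ≤ γ / K * T * Φ := by
    rcases le_or_gt 0 (1 - (T + N + Φ) / K) with h | h
    · have h1 : γ / K * T * Real.sqrt (1 - (Φ / (Φ + T))^2) * Φ ≤ γ / K * T * Φ := by
        nlinarith
      nlinarith
    · have hs : 0 ≤ γ / K * T * Real.sqrt (1 - (Φ / (Φ + T))^2) * Φ := by positivity
      nlinarith
  have hTΦ : 0 ≤ T * Φ := mul_nonneg hT hΦ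
  have h2 : γ / K * T * Φ - δ * T * Φ ≤ 0 := by nlinarith
  have h3 : β₂ * N₀ * Φ ≤ β₂ * N * Φ := by nlinarith [mul_nonneg (mul_nonneg hβ₂.le hΦ) (sub_nonneg.2 hN)]
  unfold f₃
  nlinarith

theorem Phi_exponential_decay_delta_ge
    (β₂ γ δ K N₀ : ℝ)
    (hβ₂ : 0 < β₂) (hγ : 0 < γ) (hδ : 0 < δ) (hK : 0 < K)
    (hδγ : γ / K ≤ δ) (hN₀ : 0 < N₀)
    (T N Φ : ℝ → ℝ)
    (hTnonneg : ∀ t, 0 ≤ t → 0 ≤ T t)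
    (hΦnonneg : ∀ t, 0 ≤ t → 0 ≤ Φ t)
    (hNlb : ∀ t, 0 ≤ t → N₀ ≤ N t)
    (hΦderiv : ∀ t, 0 ≤ t → HasDerivAt Φ (f₃ β₂ γ δ K (T t) (N t) (Φ t)) t) :
    ∀ t, 0 ≤ t → Φ t ≤ Φ 0 * Real.exp (-(β₂ * N₀) * t) := by
  intro t ht
  have hcont : ContinuousOn Φ (Set.Icc 0 t) := fun x hx =>
    ((hΦderiv x hx.1).continuousAt).continuousWithinAt
  have key := le_gronwallBound_of_liminf_deriv_right_le
    (f := Φ) (f' := fun x => f₃ β₂ γ δ K (T x) (N x) (Φ x))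
    (δ := Φ 0) (K := -(β₂ * N₀)) (ε := 0) (a := 0) (b := t)
    hcont
    (fun x hx r hr => by
      have hd := (hΦderiv x hx.1).hasDerivWithinAt (s := Set.Ici x)
      have := hd.liminf_right_slope_le hr
      exact this)
    le_rfl
    (fun x hx => by
      have := f3_bound β₂ γ δ K N₀ (T x) (N x) (Φ x) hβ₂ hγ hK hδγ
        (hTnonneg x hx.1) (hΦnonneg x hx.1) (hNlb x hx.1) hN₀
      linarith)
    t ⟨ht, le_rfl⟩
  simpa [gronwallBound_ε0] using key
end

section
/- (Decay near carrying capacity) Let ε > 0 and suppose N(t) ≥ K − ε for all t ≥ 0, with 0 ≤ T, Φ ≤ K solving the glioblastoma ODE reactions. Then Φ'(t) ≤ (γε/K − β₂(K−ε))·Φ(t), and hence Φ(t) ≤ Φ(0)·e^{−(β₂(K−ε) − γε/K)t}; in particular if γε/K < β₂(K−ε) then Φ(t) → 0 exponentially as t → ∞. -/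
open Real Filter Set Topology

theorem le_mul_exp_of_hasDerivAt_le_mul {f f' : ℝ → ℝ} {c : ℝ}
    (hf : ∀ t, 0 ≤ t → HasDerivAt f (f' t) t) (hle : ∀ t, 0 ≤ t → f' t ≤ c * f t)
    {t : ℝ} (ht : 0 ≤ t) : f t ≤ f 0 * exp (c * t) := by
  have hcont : ContinuousOn f (Icc 0 t) := fun s hs =>
    (hf s hs.1).continuousAt.continuousWithinAt
  have hgronwall := le_gronwallBound_of_liminf_deriv_right_le (ε := 0) hcont
    (fun s hs _ hr => (hf s hs.1).hasDerivWithinAt.liminf_right_slope_le hr) le_rfl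
    (fun s hs => by simpa using hle s hs.1) t ⟨ht, le_rfl⟩
  simpa [gronwallBound_ε0] using hgronwall

theorem tendsto_zero_of_nonneg_of_le_mul_exp {f : ℝ → ℝ} {C c : ℝ} (hc : c < 0)
    (hnonneg : ∀ t, 0 ≤ t → 0 ≤ f t) (hle : ∀ t, 0 ≤ t → f t ≤ C * exp (c * t)) :
    Tendsto f atTop (𝓝 0) := by
  have hexp : Tendsto (fun t => C * exp (c * t)) atTop (𝓝 0) := by
    simpa using (tendsto_exp_atBot.comp (tendsto_id.const_mul_atTop_of_neg hc)).const_mul C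
  exact squeeze_zero' (eventually_atTop.2 ⟨0, hnonneg⟩) (eventually_atTop.2 ⟨0, hle⟩) hexp

theorem f₃_le_of_le_capacity {β₂ γ δ K ε T N Φ : ℝ} (hβ₂ : 0 ≤ β₂) (hγ : 0 ≤ γ) (hδ : 0 ≤ δ)
    (hK : 0 < K) (hε : 0 ≤ ε) (hT : 0 ≤ T) (hTK : T ≤ K) (hΦ : 0 ≤ Φ) (hN : K - ε ≤ N) :
    f₃ β₂ γ δ K T N Φ ≤ (γ * ε / K - β₂ * (K - ε)) * Φ := by
  unfold f₃
  set s := √(1 - (Φ / (Φ + T)) ^ 2)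
  have hs : s ≤ 1 := sqrt_le_one.mpr (by nlinarith [sq_nonneg (Φ / (Φ + T))])
  have hgrowth : γ / K * T * s * Φ ≤ γ * Φ :=
    calc γ / K * T * s * Φ ≤ γ / K * K * 1 * Φ := by gcongr
      _ = γ * Φ := by field_simp
  have hcrowding : 1 - (T + N + Φ) / K ≤ ε / K := by
    rw [sub_le_iff_le_add, ← add_div, le_div_iff₀ hK]
    linarith
  have hgrowth_crowding :
      γ / K * T * s * Φ * (1 - (T + N + Φ) / K) ≤ γ * Φ * (ε / K) :=
    calc γ / K * T * s * Φ * (1 - (T + N + Φ) / K) ≤ γ / K * T * s * Φ * (ε / K) := by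
          gcongr
      _ ≤ γ * Φ * (ε / K) := by gcongr
  have hpredation : β₂ * (K - ε) * Φ ≤ β₂ * N * Φ := by gcongr
  have hkilling : 0 ≤ δ * T * Φ := by positivity
  linear_combination hgrowth_crowding + hpredation + hkilling

theorem decay_near_carrying_capacity
    (β₂ γ δ K ε : ℝ)
    (hβ₂ : 0 < β₂) (hγ : 0 < γ) (hδ : 0 < δ) (hK : 0 < K) (hε : 0 < ε)
    (T N Φ : ℝ → ℝ)
    (hTnonneg : ∀ t, 0 ≤ t → 0 ≤ T t) (hTle : ∀ t, 0 ≤ t → T t ≤ K)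
    (hΦnonneg : ∀ t, 0 ≤ t → 0 ≤ Φ t)
    (hNlb : ∀ t, 0 ≤ t → K - ε ≤ N t)
    (hΦderiv : ∀ t, 0 ≤ t → HasDerivAt Φ (f₃ β₂ γ δ K (T t) (N t) (Φ t)) t) :
    (∀ t, 0 ≤ t → f₃ β₂ γ δ K (T t) (N t) (Φ t) ≤ (γ * ε / K - β₂ * (K - ε)) * Φ t) ∧
    (∀ t, 0 ≤ t → Φ t ≤ Φ 0 * Real.exp (-(β₂ * (K - ε) - γ * ε / K) * t)) ∧
    (γ * ε / K < β₂ * (K - ε) → Filter.Tendsto Φ Filter.atTop (nhds 0)) := by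
  have hrate : ∀ t, 0 ≤ t →
      f₃ β₂ γ δ K (T t) (N t) (Φ t) ≤ (γ * ε / K - β₂ * (K - ε)) * Φ t := fun t ht =>
    f₃_le_of_le_capacity hβ₂.le hγ.le hδ.le hK hε.le (hTnonneg t ht) (hTle t ht)
      (hΦnonneg t ht) (hNlb t ht)
  have hdecay : ∀ t, 0 ≤ t → Φ t ≤ Φ 0 * Real.exp (-(β₂ * (K - ε) - γ * ε / K) * t) := by
    intro t ht
    rw [neg_sub]
    exact le_mul_exp_of_hasDerivAt_le_mul hΦderiv hrate ht
  exact ⟨hrate, hdecay, fun hlt =>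
    tendsto_zero_of_nonneg_of_le_mul_exp (by linarith) hΦnonneg hdecay⟩
end
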